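/- arXiv:2209.01730 — 7 statements merged into one kernel-verified Lean document; each statement's English description precedes it below -/
import Mathlib

section
/- Suppose X ∈ ℝ^{n×n} satisfies the NSARE A^T X + X A − X B_u Θ_{n_u} B_u^T X + C^T Θ_{n_y} C = 0. Then for every s ∈ ℂ such that sI − A and −sI − A^T are invertible, one has (I + B_u^T(−sI − A^T)⁻¹ X B_u Θ_{n_u}) · Θ_{n_u} · (I + Θ_{n_u} B_u^T X (sI − A)⁻¹ B_u) = Θ_{n_u} − B_u^T(−sI − A^T)⁻¹ C^T Θ_{n_y} C (sI − A)⁻¹ B_u. -/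
open Matrix

/-- The block-diagonal matrix `diag(J, J, ..., J)` built from copies of
`J = [[0,1],[-1,0]]`, of size `m × m` (for `m` even). -/
def Theta (m : ℕ) : Matrix (Fin m) (Fin m) ℝ :=
  Matrix.of fun i j =>
    if i.val % 2 = 0 ∧ j.val = i.val + 1 then (1 : ℝ)
    else if j.val % 2 = 0 ∧ i.val = j.val + 1 then (-1 : ℝ)
    else 0

lemma theta_sq (m : ℕ) (hm : Even m) : Theta m * Theta m = -1 := by
  have hm2 : m % 2 = 0 := Nat.even_iff.mp hm
  ext i k
  rw [Matrix.mul_apply]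
  have hrhs : (-1 : Matrix (Fin m) (Fin m) ℝ) i k = if i.val = k.val then -1 else 0 := by
    by_cases h : i = k
    · subst h; simp
    · have : i.val ≠ k.val := fun hv => h (Fin.ext hv)
      simp [Matrix.one_apply, h, this]
  rw [hrhs]
  rcases Nat.even_or_odd i.val with hi | hi
  · have hi2 : i.val % 2 = 0 := Nat.even_iff.mp hi
    have hlt : i.val + 1 < m := by have := i.isLt; omega
    rw [Finset.sum_eq_single (⟨i.val + 1, hlt⟩ : Fin m)]
    · have h1 : Theta m i ⟨i.val + 1, hlt⟩ = 1 := by simp [Theta, hi2]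
      have h2 : Theta m ⟨i.val + 1, hlt⟩ k = if i.val = k.val then -1 else 0 := by
        simp only [Theta, Matrix.of_apply]
        rw [if_neg (by rintro ⟨h, -⟩; omega)]
        by_cases hk : i.val = k.val
        · rw [if_pos ⟨by omega, by omega⟩, if_pos hk]
        · rw [if_neg (by rintro ⟨-, h⟩; omega), if_neg hk]
      rw [h1, h2, one_mul]
    · intro b _ hb
      have hb' : b.val ≠ i.val + 1 := fun h => hb (Fin.ext h)
      have h0 : Theta m i b = 0 := by
        simp only [Theta, Matrix.of_apply]
        rw [if_neg (by rintro ⟨-, h⟩; omega), if_neg (by rintro ⟨h, h'⟩; omega)]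
      rw [h0, zero_mul]
    · intro h; exact absurd (Finset.mem_univ _) h
  · have hi2 : i.val % 2 = 1 := Nat.odd_iff.mp hi
    have hlt : i.val - 1 < m := by have := i.isLt; omega
    rw [Finset.sum_eq_single (⟨i.val - 1, hlt⟩ : Fin m)]
    · have h1 : Theta m i ⟨i.val - 1, hlt⟩ = -1 := by
        simp only [Theta, Matrix.of_apply]
        rw [if_neg (by rintro ⟨h, -⟩; omega), if_pos ⟨by omega, by omega⟩]
      have h2 : Theta m ⟨i.val - 1, hlt⟩ k = if i.val = k.val then 1 else 0 := by
        simp only [Theta, Matrix.of_apply]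
        by_cases hk : i.val = k.val
        · rw [if_pos ⟨by omega, by omega⟩, if_pos hk]
        · rw [if_neg (by rintro ⟨-, h⟩; omega),
            if_neg (by rintro ⟨h', h⟩; omega), if_neg hk]
      rw [h1, h2]
      by_cases hk : i.val = k.val <;> simp [hk]
    · intro b _ hb
      have hb' : b.val ≠ i.val - 1 := fun h => hb (Fin.ext h)
      have h0 : Theta m i b = 0 := by
        simp only [Theta, Matrix.of_apply]
        rw [if_neg (by rintro ⟨h, -⟩; omega), if_neg (by rintro ⟨-, h⟩; omega)]
      rw [h0, zero_mul]
    · intro h; exact absurd (Finset.mem_univ _) h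

lemma mapC_mul {p q r : ℕ} (M : Matrix (Fin p) (Fin q) ℝ) (N : Matrix (Fin q) (Fin r) ℝ) :
    (M * N).map Complex.ofReal = M.map Complex.ofReal * N.map Complex.ofReal := by
  ext i j
  simp [Matrix.mul_apply, Matrix.map_apply]

lemma mapC_add {p q : ℕ} (M N : Matrix (Fin p) (Fin q) ℝ) :
    (M + N).map Complex.ofReal = M.map Complex.ofReal + N.map Complex.ofReal := by
  ext i j; simp

lemma mapC_sub {p q : ℕ} (M N : Matrix (Fin p) (Fin q) ℝ) :
    (M - N).map Complex.ofReal = M.map Complex.ofReal - N.map Complex.ofReal := by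
  ext i j; simp

lemma mapC_zero {p q : ℕ} : (0 : Matrix (Fin p) (Fin q) ℝ).map Complex.ofReal = 0 := by
  ext i j; simp

lemma mapC_transpose {p q : ℕ} (M : Matrix (Fin p) (Fin q) ℝ) :
    Mᵀ.map Complex.ofReal = (M.map Complex.ofReal)ᵀ := by
  ext i j; simp

lemma mapC_neg_one {p : ℕ} : (-1 : Matrix (Fin p) (Fin p) ℝ).map Complex.ofReal = -1 := by
  ext i j; simp [Matrix.one_apply, apply_ite]

lemma theta_sq_c (m : ℕ) (hm : Even m) :
    ((Theta m).map Complex.ofReal) * ((Theta m).map Complex.ofReal) = -1 := by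
  rw [← mapC_mul, theta_sq m hm, mapC_neg_one]

theorem stmt_2 (n nu ny : ℕ) (hn : Even n) (hn0 : 0 < n)
    (hnu : Even nu) (hnu0 : 0 < nu) (hny : Even ny) (hny0 : 0 < ny)
    (A : Matrix (Fin n) (Fin n) ℝ) (Bu : Matrix (Fin n) (Fin nu) ℝ)
    (C : Matrix (Fin ny) (Fin n) ℝ)
    (X : Matrix (Fin n) (Fin n) ℝ)
    (hX : Aᵀ * X + X * A - X * Bu * Theta nu * Buᵀ * X + Cᵀ * Theta ny * C = 0)
    (s : ℂ)
    (Ac : Matrix (Fin n) (Fin n) ℂ) (hAc : Ac = A.map Complex.ofReal)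
    (Buc : Matrix (Fin n) (Fin nu) ℂ) (hBuc : Buc = Bu.map Complex.ofReal)
    (Cc : Matrix (Fin ny) (Fin n) ℂ) (hCc : Cc = C.map Complex.ofReal)
    (Xc : Matrix (Fin n) (Fin n) ℂ) (hXc : Xc = X.map Complex.ofReal)
    (hs1 : IsUnit (s • (1 : Matrix (Fin n) (Fin n) ℂ) - Ac).det)
    (hs2 : IsUnit (-(s • (1 : Matrix (Fin n) (Fin n) ℂ)) - Acᵀ).det) :
    (1 + Bucᵀ * (-(s • 1) - Acᵀ)⁻¹ * Xc * Buc * (Theta nu).map Complex.ofReal) *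
        (Theta nu).map Complex.ofReal *
        (1 + (Theta nu).map Complex.ofReal * Bucᵀ * Xc * (s • 1 - Ac)⁻¹ * Buc) =
      (Theta nu).map Complex.ofReal -
        Bucᵀ * (-(s • 1) - Acᵀ)⁻¹ * Ccᵀ * (Theta ny).map Complex.ofReal * Cc *
          (s • 1 - Ac)⁻¹ * Buc := by
  set Θc := (Theta nu).map Complex.ofReal with hΘdef
  set Tc := (Theta ny).map Complex.ofReal with hTdef
  set G1 := (s • (1 : Matrix (Fin n) (Fin n) ℂ) - Ac)⁻¹ with hG1
  set G2 := (-(s • (1 : Matrix (Fin n) (Fin n) ℂ)) - Acᵀ)⁻¹ with hG2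
  have hΘ2 : Θc * Θc = -1 := theta_sq_c nu hnu
  have hL : ∀ M : Matrix (Fin nu) (Fin nu) ℂ, Θc * (Θc * M) = -M := by
    intro M; rw [← mul_assoc, hΘ2, neg_one_mul]
  have h1 : G2 * (-(s • (1 : Matrix (Fin n) (Fin n) ℂ)) - Acᵀ) = 1 :=
    Matrix.nonsing_inv_mul _ hs2
  have h2 : (s • (1 : Matrix (Fin n) (Fin n) ℂ) - Ac) * G1 = 1 :=
    Matrix.mul_nonsing_inv _ hs1
  have hric : Acᵀ * Xc + Xc * Ac - Xc * Buc * Θc * Bucᵀ * Xc + Ccᵀ * Tc * Cc = 0 := by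
    subst hAc hBuc hCc hXc
    have h := congrArg (fun M : Matrix (Fin n) (Fin n) ℝ => M.map Complex.ofReal) hX
    simp only [mapC_mul, mapC_add, mapC_sub, mapC_zero, mapC_transpose] at h
    exact h
  have hCtc : Ccᵀ * Tc * Cc = Xc * Buc * Θc * (Bucᵀ * Xc) - (Acᵀ * Xc + Xc * Ac) := by
    calc Ccᵀ * Tc * Cc
        = (Acᵀ * Xc + Xc * Ac - Xc * Buc * Θc * Bucᵀ * Xc + Ccᵀ * Tc * Cc)
            + (Xc * Buc * Θc * (Bucᵀ * Xc) - (Acᵀ * Xc + Xc * Ac)) := by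
          simp only [Matrix.mul_assoc]; abel
      _ = _ := by rw [hric, zero_add]
  have hmid : (-(s • (1 : Matrix (Fin n) (Fin n) ℂ)) - Acᵀ) * Xc
      + Xc * (s • (1 : Matrix (Fin n) (Fin n) ℂ) - Ac) = -(Acᵀ * Xc + Xc * Ac) := by
    simp only [sub_mul, mul_sub, neg_mul, smul_mul_assoc, mul_smul_comm, one_mul, mul_one]
    abel
  have hkey : G2 * (Acᵀ * Xc + Xc * Ac) * G1 = -(Xc * G1 + G2 * Xc) := by
    have e : G2 * (Acᵀ * Xc + Xc * Ac) * G1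
        = -(G2 * ((-(s • (1 : Matrix (Fin n) (Fin n) ℂ)) - Acᵀ) * Xc
            + Xc * (s • (1 : Matrix (Fin n) (Fin n) ℂ) - Ac)) * G1) := by
      rw [hmid]; simp only [mul_neg, neg_mul, neg_neg]
    rw [e, mul_add, add_mul, ← mul_assoc G2, h1, one_mul,
      mul_assoc G2, mul_assoc Xc, h2, mul_one, neg_add]
    try abel
  have e1 : Bucᵀ * G2 * Ccᵀ * Tc * Cc * G1 * Buc
      = Bucᵀ * (G2 * (Ccᵀ * Tc * Cc) * G1) * Buc := by
    simp only [Matrix.mul_assoc]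
  have e2 : G2 * (Xc * Buc * Θc * (Bucᵀ * Xc) - (Acᵀ * Xc + Xc * Ac)) * G1
      = G2 * (Xc * Buc * Θc * (Bucᵀ * Xc)) * G1 + (Xc * G1 + G2 * Xc) := by
    rw [mul_sub, sub_mul, hkey, sub_neg_eq_add]
  rw [e1, hCtc, e2]
  simp only [Matrix.mul_add, Matrix.add_mul, Matrix.mul_sub, Matrix.sub_mul,
    Matrix.mul_one, Matrix.one_mul, Matrix.mul_assoc]
  simp only [hL, hΘ2]
  simp only [Matrix.mul_neg, Matrix.neg_mul, Matrix.mul_one, Matrix.mul_add,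
    Matrix.add_mul, Matrix.mul_sub, Matrix.sub_mul, Matrix.mul_assoc]
  abel
end

section
/- Let H = [[A, −B_u Θ_{n_u} B_u^T], [−C^T Θ_{n_y} C, −A^T]]. Then for every s ∈ ℂ such that sI − A and sI + A^T are invertible, det(sI − A) · det(sI + A^T) · det(Θ_{n_u} − B_u^T(−sI − A^T)⁻¹ C^T Θ_{n_y} C (sI − A)⁻¹ B_u) = det(sI − H). -/
/-!
Because `Θ² = -1` and `det Θ = 1`, we have `det (Θ + X) = det (1 - Θ X)` for every `X`. Taking the
Schur complement of the block `sI - A` in `sI - H`, and moving the factors of the low-rank block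
`B_u Θ B_uᵀ` around with Sylvester's identity `det (1 - P Q) = det (1 - Q P)`, turns `det (sI - H)`
into `det (sI - A) · det (sI + Aᵀ) · det (1 - Θ B_uᵀ (sI + Aᵀ)⁻¹ Cᵀ Θ C (sI - A)⁻¹ B_u)`.
The two facts about `Θ_m` hold because, up to reindexing, `Θ_{2k}` is the Kronecker product `I_k ⊗ J`.
-/

open Matrix

open scoped Kronecker

lemma Theta_eq_reindex_one_kronecker (k : ℕ) :
    Theta (k * 2) = reindexAlgEquiv ℝ ℝ finProdFinEquiv
      ((1 : Matrix (Fin k) (Fin k) ℝ) ⊗ₖ Theta 2) := by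
  ext i j
  obtain ⟨⟨a, b⟩, rfl⟩ := finProdFinEquiv.surjective i
  obtain ⟨⟨c, d⟩, rfl⟩ := finProdFinEquiv.surjective j
  rw [coe_reindexAlgEquiv, reindex_apply, submatrix_apply, Equiv.symm_apply_apply,
    Equiv.symm_apply_apply, kronecker_apply, one_apply]
  simp only [Theta, of_apply, finProdFinEquiv_apply_val, Fin.ext_iff]
  fin_cases b <;> fin_cases d <;> simp <;> split_ifs <;> (try norm_num) <;> omega

lemma Theta_two_mul_self : Theta 2 * Theta 2 = -1 := by
  ext i j
  fin_cases i <;> fin_cases j <;> simp [mul_apply, Theta, Fin.sum_univ_two]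

lemma det_Theta_two : (Theta 2).det = 1 := by
  simp [det_fin_two, Theta]

lemma Theta_mul_self {m : ℕ} (hm : Even m) : Theta m * Theta m = -1 := by
  obtain ⟨k, hk⟩ := hm
  obtain rfl : m = k * 2 := by omega
  rw [Theta_eq_reindex_one_kronecker, ← map_mul, ← mul_kronecker_mul, one_mul,
    Theta_two_mul_self, show (-1 : Matrix (Fin 2) (Fin 2) ℝ) = (-1 : ℝ) • 1 by simp,
    kronecker_smul, one_kronecker_one, map_smul, map_one, neg_one_smul]

lemma det_Theta {m : ℕ} (hm : Even m) : (Theta m).det = 1 := by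
  obtain ⟨k, hk⟩ := hm
  obtain rfl : m = k * 2 := by omega
  rw [Theta_eq_reindex_one_kronecker, det_reindexAlgEquiv, det_kronecker, det_one,
    det_Theta_two, one_pow, one_pow, one_mul]

section

variable {m n p R : Type*} [Fintype m] [DecidableEq m] [Fintype n] [DecidableEq n]
  [Fintype p] [DecidableEq p] [CommRing R]

lemma Matrix.det_add_of_mul_self_eq_neg_one {T : Matrix p p R} (hT : T * T = -1)
    (X : Matrix p p R) : (T + X).det = T.det * (1 - T * X).det := by
  rw [← det_mul, Matrix.mul_sub, Matrix.mul_one, ← Matrix.mul_assoc, hT, neg_one_mul,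
    sub_neg_eq_add]

lemma Matrix.inv_neg_of_isUnit_det {S : Matrix n n R} (hS : IsUnit S.det) : (-S)⁻¹ = -S⁻¹ :=
  inv_eq_right_inv (by rw [Matrix.neg_mul, Matrix.mul_neg, neg_neg, mul_nonsing_inv _ hS])

lemma Matrix.det_fromBlocks_mul_of_isUnit_det {S₁ : Matrix m m R} {S₂ : Matrix n n R}
    (h₁ : IsUnit S₁.det) (h₂ : IsUnit S₂.det) (P : Matrix m p R) (Q : Matrix p n R)
    (M : Matrix n m R) :
    (fromBlocks S₁ (P * Q) M S₂).det = S₁.det * S₂.det * (1 - Q * S₂⁻¹ * M * S₁⁻¹ * P).det := by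
  have := invertibleOfIsUnitDet _ h₁
  have hSchur : S₂ - M * S₁⁻¹ * (P * Q) = S₂ * (1 - S₂⁻¹ * M * S₁⁻¹ * P * Q) := by
    simp only [Matrix.mul_sub, Matrix.mul_one, ← Matrix.mul_assoc, mul_nonsing_inv _ h₂,
      Matrix.one_mul]
  rw [det_fromBlocks₁₁, invOf_eq_nonsing_inv, hSchur, det_mul, det_one_sub_mul_comm,
    mul_assoc]
  simp only [Matrix.mul_assoc]

lemma Matrix.det_fromBlocks_of_mul_self_eq_neg_one {T : Matrix p p R} (hT : T * T = -1)
    (hdet : T.det = 1) {S₁ : Matrix m m R} {S₂ : Matrix n n R} (h₁ : IsUnit S₁.det)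
    (h₂ : IsUnit S₂.det) (U : Matrix m p R) (V : Matrix p n R) (M : Matrix n m R) :
    S₁.det * S₂.det * (T - V * (-S₂)⁻¹ * M * S₁⁻¹ * U).det =
      (fromBlocks S₁ (U * T * V) M S₂).det := by
  have hsub : T - V * (-S₂)⁻¹ * M * S₁⁻¹ * U = T + V * S₂⁻¹ * M * S₁⁻¹ * U := by
    simp only [inv_neg_of_isUnit_det h₂, Matrix.mul_neg, Matrix.neg_mul, sub_neg_eq_add]
  rw [hsub, det_add_of_mul_self_eq_neg_one hT, hdet, one_mul, Matrix.mul_assoc U,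
    det_fromBlocks_mul_of_isUnit_det h₁ h₂]
  simp only [Matrix.mul_assoc]

end

lemma Matrix.map_ofReal_mul {l m n : Type*} [Fintype m] (M : Matrix l m ℝ) (N : Matrix m n ℝ) :
    (M * N).map Complex.ofReal = M.map Complex.ofReal * N.map Complex.ofReal :=
  Matrix.map_mul (f := Complex.ofRealHom)

lemma Matrix.det_map_ofReal {n : Type*} [Fintype n] [DecidableEq n] (M : Matrix n n ℝ) :
    (M.map Complex.ofReal).det = M.det :=
  (Complex.ofRealHom.map_det M).symm

theorem stmt_3_general (n nu ny : ℕ)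
    (hnu : Even nu)
    (A : Matrix (Fin n) (Fin n) ℝ) (Bu : Matrix (Fin n) (Fin nu) ℝ)
    (C : Matrix (Fin ny) (Fin n) ℝ)
    (H : Matrix (Fin n ⊕ Fin n) (Fin n ⊕ Fin n) ℝ)
    (hH : H = Matrix.fromBlocks A (-(Bu * Theta nu * Buᵀ))
      (-(Cᵀ * Theta ny * C)) (-Aᵀ))
    (s : ℂ)
    (Ac : Matrix (Fin n) (Fin n) ℂ) (hAc : Ac = A.map Complex.ofReal)
    (Buc : Matrix (Fin n) (Fin nu) ℂ) (hBuc : Buc = Bu.map Complex.ofReal)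
    (Cc : Matrix (Fin ny) (Fin n) ℂ) (hCc : Cc = C.map Complex.ofReal)
    (hs1 : IsUnit (s • (1 : Matrix (Fin n) (Fin n) ℂ) - Ac).det)
    (hs2 : IsUnit (s • (1 : Matrix (Fin n) (Fin n) ℂ) + Acᵀ).det) :
    (s • (1 : Matrix (Fin n) (Fin n) ℂ) - Ac).det *
        (s • (1 : Matrix (Fin n) (Fin n) ℂ) + Acᵀ).det *
        ((Theta nu).map Complex.ofReal -
          Bucᵀ * (-(s • 1) - Acᵀ)⁻¹ * Ccᵀ * (Theta ny).map Complex.ofReal * Cc *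
            (s • 1 - Ac)⁻¹ * Buc).det =
      (s • (1 : Matrix (Fin n ⊕ Fin n) (Fin n ⊕ Fin n) ℂ) - H.map Complex.ofReal).det := by
  have hsq : (Theta nu).map Complex.ofReal * (Theta nu).map Complex.ofReal = -1 := by
    rw [← map_ofReal_mul, Theta_mul_self hnu, Matrix.map_neg _ Complex.ofReal_neg,
      Matrix.map_one _ Complex.ofReal_zero Complex.ofReal_one]
  have hblocks : s • 1 - H.map Complex.ofReal = fromBlocks (s • 1 - Ac)
      (Buc * (Theta nu).map Complex.ofReal * Bucᵀ)
      (Ccᵀ * (Theta ny).map Complex.ofReal * Cc) (s • 1 + Acᵀ) := by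
    rw [hH, fromBlocks_map, ← fromBlocks_one, fromBlocks_smul, sub_eq_add_neg, fromBlocks_neg,
      fromBlocks_add]
    simp [hAc, hBuc, hCc, map_ofReal_mul, Matrix.map_neg _ Complex.ofReal_neg, transpose_map,
      sub_eq_add_neg]
  have hdet : ((Theta nu).map Complex.ofReal).det = 1 := by
    rw [det_map_ofReal, det_Theta hnu, Complex.ofReal_one]
  have key := det_fromBlocks_of_mul_self_eq_neg_one hsq hdet hs1 hs2 Buc Bucᵀ
    (Ccᵀ * (Theta ny).map Complex.ofReal * Cc)
  rw [hblocks, ← key, ← neg_add']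
  simp only [Matrix.mul_assoc]

theorem stmt_3 (n nu ny : ℕ) (hn : Even n) (hn0 : 0 < n)
    (hnu : Even nu) (hnu0 : 0 < nu) (hny : Even ny) (hny0 : 0 < ny)
    (A : Matrix (Fin n) (Fin n) ℝ) (Bu : Matrix (Fin n) (Fin nu) ℝ)
    (C : Matrix (Fin ny) (Fin n) ℝ)
    (H : Matrix (Fin n ⊕ Fin n) (Fin n ⊕ Fin n) ℝ)
    (hH : H = Matrix.fromBlocks A (-(Bu * Theta nu * Buᵀ))
      (-(Cᵀ * Theta ny * C)) (-Aᵀ))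
    (s : ℂ)
    (Ac : Matrix (Fin n) (Fin n) ℂ) (hAc : Ac = A.map Complex.ofReal)
    (Buc : Matrix (Fin n) (Fin nu) ℂ) (hBuc : Buc = Bu.map Complex.ofReal)
    (Cc : Matrix (Fin ny) (Fin n) ℂ) (hCc : Cc = C.map Complex.ofReal)
    (hs1 : IsUnit (s • (1 : Matrix (Fin n) (Fin n) ℂ) - Ac).det)
    (hs2 : IsUnit (s • (1 : Matrix (Fin n) (Fin n) ℂ) + Acᵀ).det) :
    (s • (1 : Matrix (Fin n) (Fin n) ℂ) - Ac).det *
        (s • (1 : Matrix (Fin n) (Fin n) ℂ) + Acᵀ).det *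
        ((Theta nu).map Complex.ofReal -
          Bucᵀ * (-(s • 1) - Acᵀ)⁻¹ * Ccᵀ * (Theta ny).map Complex.ofReal * Cc *
            (s • 1 - Ac)⁻¹ * Buc).det =
      (s • (1 : Matrix (Fin n ⊕ Fin n) (Fin n ⊕ Fin n) ℂ) - H.map Complex.ofReal).det :=
  stmt_3_general n nu ny hnu A Bu C H hH s Ac hAc Buc hBuc Cc hCc hs1 hs2
end

section
/- Suppose L ∈ ℝ^{n×n} satisfies the Lyapunov equation A^T L + L A + C^T Θ_{n_y} C = 0. Then for every s ∈ ℂ such that sI − A and −sI − A^T are invertible, Θ_{n_u} − B_u^T(−sI − A^T)⁻¹ C^T Θ_{n_y} C (sI − A)⁻¹ B_u = Θ_{n_u} − B_u^T(−sI − A^T)⁻¹ L B_u − B_u^T L (sI − A)⁻¹ B_u. -/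
open Matrix

/-!
Write `M = sI - A` and `N = -sI - Aᵀ`. The Lyapunov equation says exactly that
`Cᵀ Θ C = N L + L M`, so `N⁻¹ (Cᵀ Θ C) M⁻¹ = L M⁻¹ + N⁻¹ L`; sandwiching between
`B_uᵀ` and `B_u` gives the identity.
-/

namespace Matrix

variable {m R : Type*} [Fintype m] [DecidableEq m] [CommRing R]

theorem eq_shifted_of_sylvester {F A L Q : Matrix m m R} (s : R) (h : F * L + L * A + Q = 0) :
    Q = (-(s • 1) - F) * L + L * (s • 1 - A) := by
  calc Q = Q - (F * L + L * A + Q) := by rw [h, sub_zero]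
    _ = _ := by noncomm_ring

theorem inv_mul_mul_inv_of_eq_mul_add_mul {M N L Q : Matrix m m R}
    (hM : IsUnit M.det) (hN : IsUnit N.det) (hQ : Q = N * L + L * M) :
    N⁻¹ * Q * M⁻¹ = L * M⁻¹ + N⁻¹ * L := by
  rw [hQ, Matrix.mul_add, Matrix.add_mul, ← Matrix.mul_assoc, nonsing_inv_mul N hN,
    Matrix.one_mul, Matrix.mul_assoc, Matrix.mul_assoc, mul_nonsing_inv M hM, Matrix.mul_one,
    add_comm]

end Matrix

theorem stmt_7_general (n nu ny : ℕ)
    (A : Matrix (Fin n) (Fin n) ℝ)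
    (C : Matrix (Fin ny) (Fin n) ℝ)
    (L : Matrix (Fin n) (Fin n) ℝ)
    (hL : Aᵀ * L + L * A + Cᵀ * Theta ny * C = 0)
    (s : ℂ)
    (Ac : Matrix (Fin n) (Fin n) ℂ) (hAc : Ac = A.map Complex.ofReal)
    (Buc : Matrix (Fin n) (Fin nu) ℂ)
    (Cc : Matrix (Fin ny) (Fin n) ℂ) (hCc : Cc = C.map Complex.ofReal)
    (Lc : Matrix (Fin n) (Fin n) ℂ) (hLc : Lc = L.map Complex.ofReal)
    (hs1 : IsUnit (s • (1 : Matrix (Fin n) (Fin n) ℂ) - Ac).det)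
    (hs2 : IsUnit (-(s • (1 : Matrix (Fin n) (Fin n) ℂ)) - Acᵀ).det) :
    (Theta nu).map Complex.ofReal -
        Bucᵀ * (-(s • 1) - Acᵀ)⁻¹ * Ccᵀ * (Theta ny).map Complex.ofReal * Cc *
          (s • 1 - Ac)⁻¹ * Buc =
      (Theta nu).map Complex.ofReal -
        Bucᵀ * (-(s • 1) - Acᵀ)⁻¹ * Lc * Buc -
        Bucᵀ * Lc * (s • 1 - Ac)⁻¹ * Buc := by
  have hLc_lyap : Acᵀ * Lc + Lc * Ac + Ccᵀ * (Theta ny).map Complex.ofReal * Cc = 0 := by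
    subst hAc hCc hLc
    have h := congrArg (Matrix.map · Complex.ofRealHom) hL
    simp only [Matrix.map_add (f := Complex.ofRealHom) (map_add _),
      Matrix.map_mul (f := Complex.ofRealHom), Matrix.map_zero (f := Complex.ofRealHom) (map_zero _)]
      at h
    exact h
  have hsplit := inv_mul_mul_inv_of_eq_mul_add_mul hs1 hs2 (eq_shifted_of_sylvester s hLc_lyap)
  calc _ = (Theta nu).map Complex.ofReal - Bucᵀ * ((-(s • 1) - Acᵀ)⁻¹ *
          (Ccᵀ * (Theta ny).map Complex.ofReal * Cc) * (s • 1 - Ac)⁻¹) * Buc := by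
        simp only [Matrix.mul_assoc]
    _ = _ := by
        rw [hsplit, Matrix.mul_add, Matrix.add_mul]
        simp only [Matrix.mul_assoc]
        abel

theorem stmt_7 (n nu ny : ℕ) (hn : Even n) (hn0 : 0 < n)
    (hnu : Even nu) (hnu0 : 0 < nu) (hny : Even ny) (hny0 : 0 < ny)
    (A : Matrix (Fin n) (Fin n) ℝ) (Bu : Matrix (Fin n) (Fin nu) ℝ)
    (C : Matrix (Fin ny) (Fin n) ℝ)
    (L : Matrix (Fin n) (Fin n) ℝ)
    (hL : Aᵀ * L + L * A + Cᵀ * Theta ny * C = 0)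
    (s : ℂ)
    (Ac : Matrix (Fin n) (Fin n) ℂ) (hAc : Ac = A.map Complex.ofReal)
    (Buc : Matrix (Fin n) (Fin nu) ℂ) (hBuc : Buc = Bu.map Complex.ofReal)
    (Cc : Matrix (Fin ny) (Fin n) ℂ) (hCc : Cc = C.map Complex.ofReal)
    (Lc : Matrix (Fin n) (Fin n) ℂ) (hLc : Lc = L.map Complex.ofReal)
    (hs1 : IsUnit (s • (1 : Matrix (Fin n) (Fin n) ℂ) - Ac).det)
    (hs2 : IsUnit (-(s • (1 : Matrix (Fin n) (Fin n) ℂ)) - Acᵀ).det) :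
    (Theta nu).map Complex.ofReal -
        Bucᵀ * (-(s • 1) - Acᵀ)⁻¹ * Ccᵀ * (Theta ny).map Complex.ofReal * Cc *
          (s • 1 - Ac)⁻¹ * Buc =
      (Theta nu).map Complex.ofReal -
        Bucᵀ * (-(s • 1) - Acᵀ)⁻¹ * Lc * Buc -
        Bucᵀ * Lc * (s • 1 - Ac)⁻¹ * Buc :=
  stmt_7_general n nu ny A C L hL s Ac hAc Buc Cc hCc Lc hLc hs1 hs2
end

section
/- Let A ∈ ℝ^{n×n} be Hurwitz, i.e., every eigenvalue of A (viewed as a complex matrix) has strictly negative real part, let Q ∈ ℝ^{n×n} be skew-symmetric (Q^T = −Q), and suppose L ∈ ℝ^{n×n} satisfies the Lyapunov equation A^T L + L A + Q = 0. Then L is skew-symmetric, i.e., L^T = −L. -/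
open Matrix Polynomial

/-! `L + Lᵀ` solves the homogeneous Lyapunov equation `Aᵀ M + M A = 0`, i.e. `M (-A) = Aᵀ M`.
By Sylvester's theorem a matrix intertwining two matrices with disjoint spectra vanishes, and
for Hurwitz `A` the spectra of `Aᵀ` (equal to that of `A`) and of `-A` lie in opposite open
half-planes. Sylvester's theorem itself follows from Cayley–Hamilton: `X C = B X` gives
`X p(C) = p(B) X = 0` for `p = χ_B`, while `p(C)` is invertible by spectral mapping. -/

theorem SemiconjBy.aeval {R A : Type*} [CommSemiring R] [Semiring A] [Algebra R A]
    {x a b : A} (h : SemiconjBy x a b) (p : R[X]) :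
    SemiconjBy x (aeval a p) (aeval b p) := by
  induction p using Polynomial.induction_on' with
  | add p q hp hq => simpa only [map_add] using hp.add_right hq
  | monomial k r =>
    simp only [aeval_monomial]
    exact SemiconjBy.mul_right (Algebra.commutes r x).symm (h.pow_right k)

namespace Matrix

variable {m K : Type*} [Fintype m] [DecidableEq m] [Field K]

theorem spectrum_transpose (B : Matrix m m K) : spectrum K Bᵀ = spectrum K B := by
  ext μ
  simp only [mem_spectrum_iff_isRoot_charpoly, charpoly_transpose]

/-- **Sylvester's theorem.** -/
theorem eq_zero_of_mul_eq_mul_of_disjoint_spectrum [IsAlgClosed K] {B C X : Matrix m m K}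
    (hX : X * C = B * X) (hBC : Disjoint (spectrum K B) (spectrum K C)) : X = 0 := by
  rcases isEmpty_or_nonempty m with _ | _
  · exact Subsingleton.elim _ _
  have hX_charpoly : X * aeval C B.charpoly = 0 := by
    rw [(SemiconjBy.aeval hX B.charpoly : _ = _), aeval_self_charpoly, zero_mul]
  have hdeg : 0 < B.charpoly.degree := by
    rw [charpoly_degree_eq_dim]
    exact_mod_cast Fintype.card_pos
  have hunit : IsUnit (aeval C B.charpoly) := by
    rw [← spectrum.zero_notMem_iff K, spectrum.map_polynomial_aeval_of_degree_pos C _ hdeg]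
    rintro ⟨μ, hμC, hμ⟩
    exact hBC.ne_of_mem (mem_spectrum_of_isRoot_charpoly hμ) hμC rfl
  exact hunit.mul_left_eq_zero.mp hX_charpoly

def IsHurwitz (A : Matrix m m ℝ) : Prop :=
  ∀ μ ∈ spectrum ℂ (A.map Complex.ofReal), μ.re < 0

theorem IsHurwitz.disjoint_spectrum_transpose_neg {A : Matrix m m ℝ} (hA : A.IsHurwitz) :
    Disjoint (spectrum ℂ (A.map Complex.ofReal)ᵀ) (spectrum ℂ (-A.map Complex.ofReal)) := by
  rw [spectrum_transpose, ← spectrum.neg_eq, Set.disjoint_left]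
  intro μ hμ hμ_neg
  have h_neg_re : (-μ).re < 0 := hA _ (Set.mem_neg.mp hμ_neg)
  rw [Complex.neg_re] at h_neg_re
  linarith [hA μ hμ]

theorem IsHurwitz.eq_zero_of_lyapunov {A M : Matrix m m ℝ} (hA : A.IsHurwitz)
    (hM : Aᵀ * M + M * A = 0) : M = 0 := by
  set φ : Matrix m m ℝ →+* Matrix m m ℂ := Complex.ofRealHom.mapMatrix
  have hφ_injective : Function.Injective φ := map_injective Complex.ofReal_injective
  have hφ_transpose : φ Aᵀ = (φ A)ᵀ := transpose_map
  have hφM : φ M * -φ A = (φ A)ᵀ * φ M := by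
    rw [mul_neg, neg_eq_iff_add_eq_zero, add_comm, ← hφ_transpose, ← map_mul, ← map_mul,
      ← map_add, hM, map_zero]
  exact (injective_iff_map_eq_zero φ).mp hφ_injective M
    (eq_zero_of_mul_eq_mul_of_disjoint_spectrum hφM hA.disjoint_spectrum_transpose_neg)

end Matrix

theorem stmt_9 (n : ℕ)
    (A : Matrix (Fin n) (Fin n) ℝ)
    (hHurwitz : ∀ lam ∈ spectrum ℂ (A.map Complex.ofReal), lam.re < 0)
    (Q : Matrix (Fin n) (Fin n) ℝ) (hQ : Qᵀ = -Q)
    (L : Matrix (Fin n) (Fin n) ℝ)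
    (hL : Aᵀ * L + L * A + Q = 0) :
    Lᵀ = -L := by
  have hsymm : Aᵀ * (L + Lᵀ) + (L + Lᵀ) * A = 0 := by
    have hLt : Aᵀ * Lᵀ + Lᵀ * A - Q = 0 := by
      simpa [transpose_mul, hQ, sub_eq_add_neg, add_comm (Lᵀ * A)] using congrArg transpose hL
    calc Aᵀ * (L + Lᵀ) + (L + Lᵀ) * A = (Aᵀ * L + L * A + Q) + (Aᵀ * Lᵀ + Lᵀ * A - Q) := by
          rw [Matrix.mul_add, Matrix.add_mul]; abel
      _ = 0 := by rw [hL, hLt, add_zero]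
  exact (eq_neg_of_add_eq_zero_right (Matrix.IsHurwitz.eq_zero_of_lyapunov hHurwitz hsymm))
end

section
/- Let F ∈ ℝ^{n×n}, E ∈ ℝ^{n×n_u}, N_A ∈ ℝ^{n_u×n}, and suppose Y ∈ ℝ^{n×n} satisfies the Lyapunov equation F^T Y + Y F + N_A^T Θ_{n_u} N_A = 0. Then for every s ∈ ℂ such that sI − F and −sI − F^T are invertible, (I + E^T(−sI − F^T)⁻¹ N_A^T) · Θ_{n_u} · (I + N_A (sI − F)⁻¹ E) = Θ_{n_u} + (Θ_{n_u} N_A + E^T Y)(sI − F)⁻¹ E + E^T(−sI − F^T)⁻¹(N_A^T Θ_{n_u} + Y E). -/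
open Matrix

/-! The Lyapunov equation says `Nᵀ Θ N = (-sI - Fᵀ) Y + Y (sI - F)` for every `s`. Substituting
this into the quadratic term of the expanded product, the resolvents cancel one factor each. -/

section

variable {R m k : Type*} [CommRing R] [Fintype m] [DecidableEq m] [Fintype k]

theorem mul_mul_eq_of_lyapunov {F F' Y : Matrix m m R} {K : Matrix k k R} {L : Matrix k m R}
    {L' : Matrix m k R} (hY : F' * Y + Y * F + L' * K * L = 0) (s : R) :
    L' * K * L = (-(s • 1) - F') * Y + Y * (s • 1 - F) := by
  rw [eq_neg_of_add_eq_zero_right hY]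
  simp only [Matrix.sub_mul, Matrix.mul_sub, Matrix.neg_mul, smul_mul_assoc, mul_smul_comm,
    Matrix.one_mul, Matrix.mul_one]
  abel

theorem one_add_mul_mul_one_add_of_sylvester [DecidableEq k] {A B Y : Matrix m m R}
    {K : Matrix k k R} {L C : Matrix k m R} {L' D : Matrix m k R}
    (hA : IsUnit A.det) (hB : IsUnit B.det)
    (h : L' * K * L = B * Y + Y * A) :
    (1 + C * B⁻¹ * L') * K * (1 + L * A⁻¹ * D) =
      K + (K * L + C * Y) * A⁻¹ * D + C * B⁻¹ * (L' * K + Y * D) := by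
  have quadratic :
      C * B⁻¹ * (L' * K * L) * A⁻¹ * D = C * Y * A⁻¹ * D + C * B⁻¹ * (Y * D) := by
    rw [h]
    simp only [Matrix.mul_add, Matrix.add_mul, Matrix.mul_assoc,
      Matrix.nonsing_inv_mul_cancel_left _ _ hB, Matrix.mul_nonsing_inv_cancel_left _ _ hA]
  simp only [Matrix.mul_add, Matrix.add_mul, Matrix.mul_one, Matrix.one_mul,
    Matrix.mul_assoc] at quadratic ⊢
  rw [quadratic]
  abel

end

theorem stmt_10_general (n nu : ℕ)
    (F : Matrix (Fin n) (Fin n) ℝ)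
    (NA : Matrix (Fin nu) (Fin n) ℝ)
    (Y : Matrix (Fin n) (Fin n) ℝ)
    (hY : Fᵀ * Y + Y * F + NAᵀ * Theta nu * NA = 0)
    (s : ℂ)
    (Fc : Matrix (Fin n) (Fin n) ℂ) (hFc : Fc = F.map Complex.ofReal)
    (Ec : Matrix (Fin n) (Fin nu) ℂ)
    (NAc : Matrix (Fin nu) (Fin n) ℂ) (hNAc : NAc = NA.map Complex.ofReal)
    (Yc : Matrix (Fin n) (Fin n) ℂ) (hYc : Yc = Y.map Complex.ofReal)
    (hs1 : IsUnit (s • (1 : Matrix (Fin n) (Fin n) ℂ) - Fc).det)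
    (hs2 : IsUnit (-(s • (1 : Matrix (Fin n) (Fin n) ℂ)) - Fcᵀ).det) :
    (1 + Ecᵀ * (-(s • 1) - Fcᵀ)⁻¹ * NAcᵀ) * (Theta nu).map Complex.ofReal *
        (1 + NAc * (s • 1 - Fc)⁻¹ * Ec) =
      (Theta nu).map Complex.ofReal +
        ((Theta nu).map Complex.ofReal * NAc + Ecᵀ * Yc) * (s • 1 - Fc)⁻¹ * Ec +
        Ecᵀ * (-(s • 1) - Fcᵀ)⁻¹ * (NAcᵀ * (Theta nu).map Complex.ofReal + Yc * Ec) := by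
  have hYc : Fcᵀ * Yc + Yc * Fc + NAcᵀ * (Theta nu).map Complex.ofReal * NAc = 0 := by
    have h := congrArg (Matrix.map · Complex.ofRealHom) hY
    rw [Matrix.map_add _ (map_add _), Matrix.map_add _ (map_add _),
      Matrix.map_zero _ (map_zero _)] at h
    simp only [Matrix.map_mul] at h
    rwa [hFc, hNAc, hYc]
  exact one_add_mul_mul_one_add_of_sylvester hs1 hs2 (mul_mul_eq_of_lyapunov hYc s)

theorem stmt_10 (n nu : ℕ) (hn0 : 0 < n) (hnu : Even nu) (hnu0 : 0 < nu)
    (F : Matrix (Fin n) (Fin n) ℝ) (E : Matrix (Fin n) (Fin nu) ℝ)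
    (NA : Matrix (Fin nu) (Fin n) ℝ)
    (Y : Matrix (Fin n) (Fin n) ℝ)
    (hY : Fᵀ * Y + Y * F + NAᵀ * Theta nu * NA = 0)
    (s : ℂ)
    (Fc : Matrix (Fin n) (Fin n) ℂ) (hFc : Fc = F.map Complex.ofReal)
    (Ec : Matrix (Fin n) (Fin nu) ℂ) (hEc : Ec = E.map Complex.ofReal)
    (NAc : Matrix (Fin nu) (Fin n) ℂ) (hNAc : NAc = NA.map Complex.ofReal)
    (Yc : Matrix (Fin n) (Fin n) ℂ) (hYc : Yc = Y.map Complex.ofReal)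
    (hs1 : IsUnit (s • (1 : Matrix (Fin n) (Fin n) ℂ) - Fc).det)
    (hs2 : IsUnit (-(s • (1 : Matrix (Fin n) (Fin n) ℂ)) - Fcᵀ).det) :
    (1 + Ecᵀ * (-(s • 1) - Fcᵀ)⁻¹ * NAcᵀ) * (Theta nu).map Complex.ofReal *
        (1 + NAc * (s • 1 - Fc)⁻¹ * Ec) =
      (Theta nu).map Complex.ofReal +
        ((Theta nu).map Complex.ofReal * NAc + Ecᵀ * Yc) * (s • 1 - Fc)⁻¹ * Ec +
        Ecᵀ * (-(s • 1) - Fcᵀ)⁻¹ * (NAcᵀ * (Theta nu).map Complex.ofReal + Yc * Ec) :=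
  stmt_10_general n nu F NA Y hY s Fc hFc Ec NAc hNAc Yc hYc hs1 hs2
end

section
/- Suppose L ∈ ℝ^{n×n} satisfies A^T L + L A + C^T Θ_{n_y} C = 0 and Y ∈ ℝ^{n×n} satisfies A^T Y + Y A + N_A^T Θ_{n_u} N_A = 0, where N_A ∈ ℝ^{n_u×n} is given by N_A = Θ_{n_u} B_u^T X with X := L + Y. If X is skew-symmetric (X^T = −X), then X satisfies the NSARE: A^T X + X A − X B_u Θ_{n_u} B_u^T X + C^T Θ_{n_y} C = 0. -/
open Matrix

lemma theta_skew (m : ℕ) : (Theta m)ᵀ = -(Theta m) := by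
  ext i j
  simp only [Theta, Matrix.transpose_apply, Matrix.neg_apply, Matrix.of_apply]
  split_ifs <;> (try simp only [Fin.val_mk] at *) <;> (try norm_num) <;> omega

theorem stmt_11 (n nu ny : ℕ) (hn : Even n) (hn0 : 0 < n)
    (hnu : Even nu) (hnu0 : 0 < nu) (hny : Even ny) (hny0 : 0 < ny)
    (A : Matrix (Fin n) (Fin n) ℝ) (Bu : Matrix (Fin n) (Fin nu) ℝ)
    (C : Matrix (Fin ny) (Fin n) ℝ)
    (L Y : Matrix (Fin n) (Fin n) ℝ)
    (X : Matrix (Fin n) (Fin n) ℝ) (hXdef : X = L + Y)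
    (NA : Matrix (Fin nu) (Fin n) ℝ) (hNA : NA = Theta nu * Buᵀ * X)
    (hL : Aᵀ * L + L * A + Cᵀ * Theta ny * C = 0)
    (hY : Aᵀ * Y + Y * A + NAᵀ * Theta nu * NA = 0)
    (hXskew : Xᵀ = -X) :
    Aᵀ * X + X * A - X * Bu * Theta nu * Buᵀ * X + Cᵀ * Theta ny * C = 0 := by
  have e1 : NAᵀ = X * Bu * Theta nu := by
    rw [hNA]
    simp only [Matrix.transpose_mul, Matrix.transpose_transpose, hXskew, theta_skew,
      Matrix.mul_neg, Matrix.neg_mul, neg_neg, Matrix.mul_assoc]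
  have key : NAᵀ * Theta nu * NA = -(X * Bu * Theta nu * Buᵀ * X) := by
    rw [e1, hNA]
    have h3 : X * Bu * Theta nu * Theta nu * (Theta nu * Buᵀ * X)
        = X * Bu * (Theta nu * Theta nu) * (Theta nu * Buᵀ * X) := by
      simp only [Matrix.mul_assoc]
    rw [h3, theta_sq nu hnu]
    simp only [Matrix.mul_neg, Matrix.neg_mul, Matrix.mul_one, Matrix.mul_assoc]
  have hmain : Aᵀ * X + X * A - X * Bu * Theta nu * Buᵀ * X + Cᵀ * Theta ny * C
      = (Aᵀ * L + L * A + Cᵀ * Theta ny * C) + (Aᵀ * Y + Y * A + NAᵀ * Theta nu * NA) := by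
    rw [key, hXdef]
    simp only [Matrix.add_mul, Matrix.mul_add, sub_eq_add_neg]
    abel
  rw [hmain, hL, hY, add_zero]
end

section
/- Suppose X ∈ ℝ^{n×n} satisfies the NSARE A^T X + X A − X B_u Θ_{n_u} B_u^T X + C^T Θ_{n_y} C = 0. Then for every s ∈ ℂ such that sI − A and −sI − A^T are invertible, −X(sI − A)⁻¹ − (−sI − A^T)⁻¹X + (−sI − A^T)⁻¹ C^T Θ_{n_y} C (sI − A)⁻¹ = (−sI − A^T)⁻¹ X B_u Θ_{n_u} B_u^T X (sI − A)⁻¹. -/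
/-! With `M = sI - A` and `N = -sI - Aᵀ` the Lyapunov part of the Riccati equation reads
`Aᵀ X + X A = -N X - X M`, so the equation says `-N X - X M + Cᵀ Θ C = X B Θ Bᵀ X`;
multiplying by `N⁻¹` on the left and by `M⁻¹` on the right gives the identity. -/

open Matrix

theorem inv_mul_sylvester_mul_inv {α : Type*} [Ring α] {M M' N N' : α}
    (hM : M * M' = 1) (hN : N' * N = 1) (X P : α) :
    N' * (-(N * X) - X * M + P) * M' = -(X * M') - N' * X + N' * P * M' := by
  have hNX : N' * (N * X) * M' = X * M' := by rw [← mul_assoc N', hN, one_mul]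
  have hXM : N' * (X * M) * M' = N' * X := by rw [mul_assoc, mul_assoc, hM, mul_one]
  rw [mul_add, add_mul, mul_sub, sub_mul, mul_neg, neg_mul, hNX, hXM]

theorem neg_neg_smul_one_sub_mul_sub_mul_smul_one_sub {R α : Type*} [CommRing R] [Ring α]
    [Algebra R α] (a : R) (P Q X : α) :
    -((-(a • 1) - P) * X) - X * (a • 1 - Q) = P * X + X * Q := by
  simp only [sub_mul, mul_sub, neg_mul, smul_mul_assoc, mul_smul_comm, one_mul, mul_one]
  abel

section Riccati

variable {R S : Type*} [CommRing R] [CommRing S] {n m p : Type*} [Fintype n] [Fintype m]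
  [Fintype p]

def riccati (A X : Matrix n n R) (B : Matrix n m R) (U : Matrix m m R) (C : Matrix p n R)
    (V : Matrix p p R) : Matrix n n R :=
  Aᵀ * X + X * A - X * B * U * Bᵀ * X + Cᵀ * V * C

theorem riccati_map (f : R →+* S) (A X : Matrix n n R) (B : Matrix n m R) (U : Matrix m m R)
    (C : Matrix p n R) (V : Matrix p p R) :
    (riccati A X B U C V).map f =
      riccati (A.map f) (X.map f) (B.map f) (U.map f) (C.map f) (V.map f) := by
  simp only [riccati, Matrix.map_add _ (map_add f), Matrix.map_sub _ (map_sub f), Matrix.map_mul,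
    Matrix.transpose_map]

variable [DecidableEq n]

theorem riccati_resolvent_identity {A X : Matrix n n R} {B : Matrix n m R} {U : Matrix m m R}
    {C : Matrix p n R} {V : Matrix p p R} (hX : riccati A X B U C V = 0) (s : R)
    (hs₁ : IsUnit (s • (1 : Matrix n n R) - A).det)
    (hs₂ : IsUnit (-(s • (1 : Matrix n n R)) - Aᵀ).det) :
    -(X * (s • 1 - A)⁻¹) - (-(s • 1) - Aᵀ)⁻¹ * X +
        (-(s • 1) - Aᵀ)⁻¹ * Cᵀ * V * C * (s • 1 - A)⁻¹ =
      (-(s • 1) - Aᵀ)⁻¹ * X * B * U * Bᵀ * X * (s • 1 - A)⁻¹ := by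
  have hshift : -((-(s • 1) - Aᵀ) * X) - X * (s • 1 - A) + Cᵀ * V * C =
      X * B * U * Bᵀ * X := by
    rw [neg_neg_smul_one_sub_mul_sub_mul_smul_one_sub, ← sub_eq_zero, ← hX, riccati]
    abel
  have h := congrArg (fun Y => (-(s • 1) - Aᵀ)⁻¹ * Y * (s • 1 - A)⁻¹) hshift
  simp only [inv_mul_sylvester_mul_inv (mul_nonsing_inv _ hs₁) (nonsing_inv_mul _ hs₂)] at h
  simpa only [Matrix.mul_assoc] using h

end Riccati

theorem stmt_16_general (n nu ny : ℕ)
    (A : Matrix (Fin n) (Fin n) ℝ) (Bu : Matrix (Fin n) (Fin nu) ℝ)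
    (C : Matrix (Fin ny) (Fin n) ℝ)
    (X : Matrix (Fin n) (Fin n) ℝ)
    (hX : Aᵀ * X + X * A - X * Bu * Theta nu * Buᵀ * X + Cᵀ * Theta ny * C = 0)
    (s : ℂ)
    (Ac : Matrix (Fin n) (Fin n) ℂ) (hAc : Ac = A.map Complex.ofReal)
    (Buc : Matrix (Fin n) (Fin nu) ℂ) (hBuc : Buc = Bu.map Complex.ofReal)
    (Cc : Matrix (Fin ny) (Fin n) ℂ) (hCc : Cc = C.map Complex.ofReal)
    (Xc : Matrix (Fin n) (Fin n) ℂ) (hXc : Xc = X.map Complex.ofReal)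
    (hs1 : IsUnit (s • (1 : Matrix (Fin n) (Fin n) ℂ) - Ac).det)
    (hs2 : IsUnit (-(s • (1 : Matrix (Fin n) (Fin n) ℂ)) - Acᵀ).det) :
    -(Xc * (s • 1 - Ac)⁻¹) - (-(s • 1) - Acᵀ)⁻¹ * Xc +
        (-(s • 1) - Acᵀ)⁻¹ * Ccᵀ * (Theta ny).map Complex.ofReal * Cc * (s • 1 - Ac)⁻¹ =
      (-(s • 1) - Acᵀ)⁻¹ * Xc * Buc * (Theta nu).map Complex.ofReal * Bucᵀ * Xc *
        (s • 1 - Ac)⁻¹ := by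
  have hXc' : riccati Ac Xc Buc ((Theta nu).map Complex.ofReal) Cc
      ((Theta ny).map Complex.ofReal) = 0 := by
    have h := congrArg (Matrix.map · Complex.ofRealHom) hX
    rw [← riccati, riccati_map, Matrix.map_zero _ (map_zero _)] at h
    subst hAc hBuc hCc hXc
    exact h
  exact riccati_resolvent_identity hXc' s hs1 hs2

theorem stmt_16 (n nu ny : ℕ) (hn : Even n) (hn0 : 0 < n)
    (hnu : Even nu) (hnu0 : 0 < nu) (hny : Even ny) (hny0 : 0 < ny)
    (A : Matrix (Fin n) (Fin n) ℝ) (Bu : Matrix (Fin n) (Fin nu) ℝ)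
    (C : Matrix (Fin ny) (Fin n) ℝ)
    (X : Matrix (Fin n) (Fin n) ℝ)
    (hX : Aᵀ * X + X * A - X * Bu * Theta nu * Buᵀ * X + Cᵀ * Theta ny * C = 0)
    (s : ℂ)
    (Ac : Matrix (Fin n) (Fin n) ℂ) (hAc : Ac = A.map Complex.ofReal)
    (Buc : Matrix (Fin n) (Fin nu) ℂ) (hBuc : Buc = Bu.map Complex.ofReal)
    (Cc : Matrix (Fin ny) (Fin n) ℂ) (hCc : Cc = C.map Complex.ofReal)
    (Xc : Matrix (Fin n) (Fin n) ℂ) (hXc : Xc = X.map Complex.ofReal)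
    (hs1 : IsUnit (s • (1 : Matrix (Fin n) (Fin n) ℂ) - Ac).det)
    (hs2 : IsUnit (-(s • (1 : Matrix (Fin n) (Fin n) ℂ)) - Acᵀ).det) :
    -(Xc * (s • 1 - Ac)⁻¹) - (-(s • 1) - Acᵀ)⁻¹ * Xc +
        (-(s • 1) - Acᵀ)⁻¹ * Ccᵀ * (Theta ny).map Complex.ofReal * Cc * (s • 1 - Ac)⁻¹ =
      (-(s • 1) - Acᵀ)⁻¹ * Xc * Buc * (Theta nu).map Complex.ofReal * Bucᵀ * Xc *
        (s • 1 - Ac)⁻¹ :=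
  stmt_16_general n nu ny A Bu C X hX s Ac hAc Buc hBuc Cc hCc Xc hXc hs1 hs2
end
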